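/- The coproduct Δ_h is coassociative on k[Y^∞]_h: (Δ_h ⊗ Id) ∘ Δ_h = (Id ⊗ Δ_h) ∘ Δ_h. -/

import Mathlib

/-- Genus-labelled graphs: `one` is the trivial graph `1 = |`, `vee` is grafting `∨`,
and `br` is the bridge operation `⌒` (which creates a loop). -/
inductive G where
  | one : G
  | vee : G → G → G
  | br : G → G → G
deriving DecidableEq

namespace G

/-- The order of a graph: the number of internal vertices of the underlying tree. -/
def order : G → ℕ
  | one => 0
  | vee a b => order a + order b + 1
  | br a b => order a + order b + 1

/-- The genus (loop number) of a graph. -/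
def genus : G → ℕ
  | one => 0
  | vee a b => genus a + genus b
  | br a b => genus a + genus b + 1

/-- The number of free (uncontracted) leaves of a graph. -/
def freeLeaves : G → ℕ
  | one => 1
  | vee a b => freeLeaves a + freeLeaves b
  | br a b => freeLeaves a + freeLeaves b - 2

/-- A graph is regular when every bridge genuinely contracts two free leaves;
irregular graphs are those in which some leaf is involved in more than one loop
contraction. -/
def Regular : G → Prop
  | one => True
  | vee a b => Regular a ∧ Regular b
  | br a b => Regular a ∧ Regular b ∧ 1 ≤ freeLeaves a ∧ 1 ≤ freeLeaves b

end G

/-- The quantized product `∗_h` on basis graphs, with values in the free `k`-module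
`k[Y^∞]_h`: `t ∗_h 1 = 1 ∗_h t = t` and
`(t₁∘t₂) ∗_h (s₁∘'s₂) = ((t₁∘t₂) ∗_h s₁) ∘' s₂ + t₁ ∘ (t₂ ∗_h (s₁∘'s₂))`
for `∘, ∘' ∈ {∨, ⌒}`. -/
noncomputable def G.hstar (k : Type*) [CommRing k] : G → G → (G →₀ k)
  | .one, t => Finsupp.single t 1
  | .vee a b, .one => Finsupp.single (.vee a b) 1
  | .br a b, .one => Finsupp.single (.br a b) 1
  | .vee a b, .vee c d =>
      Finsupp.mapDomain (fun u => G.vee u d) (G.hstar k (.vee a b) c)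
      + Finsupp.mapDomain (fun u => G.vee a u) (G.hstar k b (.vee c d))
  | .vee a b, .br c d =>
      Finsupp.mapDomain (fun u => G.br u d) (G.hstar k (.vee a b) c)
      + Finsupp.mapDomain (fun u => G.vee a u) (G.hstar k b (.br c d))
  | .br a b, .vee c d =>
      Finsupp.mapDomain (fun u => G.vee u d) (G.hstar k (.br a b) c)
      + Finsupp.mapDomain (fun u => G.br a u) (G.hstar k b (.vee c d))
  | .br a b, .br c d =>
      Finsupp.mapDomain (fun u => G.br u d) (G.hstar k (.br a b) c)
      + Finsupp.mapDomain (fun u => G.br a u) (G.hstar k b (.br c d))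
termination_by t s => t.order + s.order
decreasing_by all_goals simp [G.order] <;> omega

/-- The bilinear extension of `∗_h` to the free `k`-module `k[Y^∞]_h`. -/
noncomputable def G.hstarL (k : Type*) [CommRing k] (x y : G →₀ k) : G →₀ k :=
  x.sum fun t a => y.sum fun s b => (a * b) • G.hstar k t s

/-- The one-loop graph `O = | ⌒ |`. -/
def G.O : G := G.br G.one G.one

/-- The one-vertex tree `T = | ∨ |`. -/
def G.T : G := G.vee G.one G.one

/-- The quantized coproduct `Δ_h : k[Y^∞]_h → k[Y^∞]_h ⊗ k[Y^∞]_h`, where the tensor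
square of the free module on `G` is modelled as the free module on `G × G`:
`Δ_h(1) = 1⊗1` and `Δ_h(t₁∘t₂) = Σ (t₁' ∗_h t₂') ⊗ (t₁'' ∘ t₂'') + (t₁∘t₂) ⊗ 1`
for `∘ ∈ {∨, ⌒}`, in Sweedler notation. -/
noncomputable def G.cop (k : Type*) [CommRing k] : G → ((G × G) →₀ k)
  | .one => Finsupp.single (.one, .one) 1
  | .vee a b =>
      ((G.cop k a).sum fun p ca => (G.cop k b).sum fun q cb =>
        (ca * cb) • Finsupp.mapDomain (fun u => (u, G.vee p.2 q.2)) (G.hstar k p.1 q.1))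
      + Finsupp.single (G.vee a b, G.one) 1
  | .br a b =>
      ((G.cop k a).sum fun p ca => (G.cop k b).sum fun q cb =>
        (ca * cb) • Finsupp.mapDomain (fun u => (u, G.br p.2 q.2)) (G.hstar k p.1 q.1))
      + Finsupp.single (G.br a b, G.one) 1

/-!
Write `Δ`, `∗` and `∘` for the (bi)linear extensions of `Δ_h`, `∗_h` and the two graftings.
Since `Δ(t₁ ∘ t₂) = (∗ ⊗ ∘)(Δt₁, Δt₂) + (t₁ ∘ t₂) ⊗ 1`, induction on `t` shows that
`(Δ ⊗ id)Δt` and `(id ⊗ Δ)Δt` obey the same recursion, provided `Δ` is multiplicative: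
`Δ(x ∗ y) = Δx ∗ Δy` for the componentwise product `∗ ⊗ ∗` on the tensor square.
Multiplicativity, and the associativity of `∗` it uses, follow by induction on the total order,
because `∗ ⊗ ∗` and `∗ ⊗ ∘` satisfy the same recursion
`(t₁∘t₂) ∗ (s₁∘'s₂) = ((t₁∘t₂) ∗ s₁)∘'s₂ + t₁∘(t₂ ∗ (s₁∘'s₂))` as `∗` and `∘`.
-/

namespace Finsupp

variable {k : Type*} [CommRing k]

@[elab_as_elim]
theorem induction_basis {α : Type*} {motive : (α →₀ k) → Prop} (x : α →₀ k)
    (single : ∀ a, motive (single a 1)) (zero : motive 0)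
    (add : ∀ x y, motive x → motive y → motive (x + y))
    (smul : ∀ (c : k) x, motive x → motive (c • x)) : motive x := by
  induction x using Finsupp.induction_linear with
  | zero => exact zero
  | add x y hx hy => exact add x y hx hy
  | single a c => simpa using smul c _ (single a)

section Bilinear

variable {α β γ : Type*}

variable (k) in
noncomputable def bilin (f : α → β → (γ →₀ k)) : (α →₀ k) →ₗ[k] (β →₀ k) →ₗ[k] (γ →₀ k) :=
  linearCombination k fun a => linearCombination k (f a)

@[simp]
theorem bilin_single_single (f : α → β → (γ →₀ k)) (a : α) (b : β) :
    bilin k f (single a 1) (single b 1) = f a b := by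
  simp [bilin]

theorem bilin_apply (f : α → β → (γ →₀ k)) (x : α →₀ k) (y : β →₀ k) :
    bilin k f x y = x.sum fun a c => y.sum fun b d => (c * d) • f a b := by
  simp only [bilin, linearCombination_apply, LinearMap.finsupp_sum_apply, LinearMap.smul_apply,
    smul_sum, smul_smul]

variable (k) in
noncomputable def mapDomain₂ (f : α → β → γ) : (α →₀ k) →ₗ[k] (β →₀ k) →ₗ[k] (γ →₀ k) :=
  bilin k fun a b => single (f a b) 1

@[simp]
theorem mapDomain₂_single_single (f : α → β → γ) (a : α) (b : β) :
    mapDomain₂ k f (single a 1) (single b 1) = single (f a b) 1 :=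
  bilin_single_single _ a b

theorem mapDomain₂_single_right (f : α → β → γ) (x : α →₀ k) (b : β) :
    mapDomain₂ k f x (single b 1) = mapDomain (f · b) x := by
  induction x using induction_basis with
  | single a => simp
  | zero | add | smul => simp_all [mapDomain_add, mapDomain_smul]

theorem mapDomain₂_single_left (f : α → β → γ) (a : α) (y : β →₀ k) :
    mapDomain₂ k f (single a 1) y = mapDomain (f a) y := by
  induction y using induction_basis with
  | single b => simp
  | zero | add | smul => simp_all [mapDomain_add, mapDomain_smul]

end Bilinear

section Tensor

variable {α β γ : Type*}

variable (k) in
noncomputable abbrev tmul : (α →₀ k) →ₗ[k] (β →₀ k) →ₗ[k] (α × β →₀ k) := mapDomain₂ k Prod.mk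

variable (k) in
noncomputable abbrev tmulAssoc : (α × β →₀ k) →ₗ[k] (γ →₀ k) →ₗ[k] (α × β × γ →₀ k) :=
  mapDomain₂ k fun p c => (p.1, p.2, c)

theorem single_eq_tmul (a : α) (b : β) :
    single (a, b) (1 : k) = tmul k (single a 1) (single b 1) := by
  simp

theorem tmulAssoc_tmul (x : α →₀ k) (y : β →₀ k) (z : γ →₀ k) :
    tmulAssoc k (tmul k x y) z = tmul k x (tmul k y z) := by
  induction x using induction_basis with
  | zero | add | smul => simp_all
  | single a =>
  induction y using induction_basis with
  | zero | add | smul => simp_all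
  | single b =>
  induction z using induction_basis with
  | zero | add | smul => simp_all
  | single c => simp

variable {α₁ α₂ α₃ β₁ β₂ β₃ : Type*}

noncomputable def boxProd (F : (α₁ →₀ k) →ₗ[k] (α₂ →₀ k) →ₗ[k] (α₃ →₀ k))
    (F' : (β₁ →₀ k) →ₗ[k] (β₂ →₀ k) →ₗ[k] (β₃ →₀ k)) :
    (α₁ × β₁ →₀ k) →ₗ[k] (α₂ × β₂ →₀ k) →ₗ[k] (α₃ × β₃ →₀ k) :=
  bilin k fun p q =>
    tmul k (F (single p.1 1) (single q.1 1)) (F' (single p.2 1) (single q.2 1))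

theorem boxProd_tmul_tmul (F : (α₁ →₀ k) →ₗ[k] (α₂ →₀ k) →ₗ[k] (α₃ →₀ k))
    (F' : (β₁ →₀ k) →ₗ[k] (β₂ →₀ k) →ₗ[k] (β₃ →₀ k))
    (x : α₁ →₀ k) (y : β₁ →₀ k) (z : α₂ →₀ k) (w : β₂ →₀ k) :
    boxProd F F' (tmul k x y) (tmul k z w) = tmul k (F x z) (F' y w) := by
  induction x using induction_basis with
  | zero | add | smul => simp_all
  | single a =>
  induction y using induction_basis with
  | zero | add | smul => simp_all
  | single b =>
  induction z using induction_basis with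
  | zero | add | smul => simp_all
  | single c =>
  induction w using induction_basis with
  | zero | add | smul => simp_all
  | single d => simp [boxProd]

theorem boxProd_tmulAssoc {γ₁ γ₂ γ₃ : Type*} (F : (α₁ →₀ k) →ₗ[k] (α₂ →₀ k) →ₗ[k] (α₃ →₀ k))
    (F' : (β₁ →₀ k) →ₗ[k] (β₂ →₀ k) →ₗ[k] (β₃ →₀ k))
    (F'' : (γ₁ →₀ k) →ₗ[k] (γ₂ →₀ k) →ₗ[k] (γ₃ →₀ k))
    (X : α₁ × β₁ →₀ k) (Y : α₂ × β₂ →₀ k) (z : γ₁ →₀ k) (w : γ₂ →₀ k) :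
    boxProd F (boxProd F' F'') (tmulAssoc k X z) (tmulAssoc k Y w) =
      tmulAssoc k (boxProd F F' X Y) (F'' z w) := by
  induction X using induction_basis with
  | zero | add | smul => simp_all
  | single p =>
  induction Y using induction_basis with
  | zero | add | smul => simp_all
  | single q =>
  simp only [single_eq_tmul p.1 p.2, single_eq_tmul q.1 q.2, tmulAssoc_tmul, boxProd_tmul_tmul]

end Tensor

end Finsupp

namespace G

open Finsupp

def node : Bool → G → G → G
  | true => vee
  | false => br

@[simp]
theorem order_node (o : Bool) (a b : G) : (node o a b).order = a.order + b.order + 1 := by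
  cases o <;> rfl

theorem eq_one_or_eq_node (t : G) : t = one ∨ ∃ o a b, t = node o a b := by
  cases t with
  | one => exact .inl rfl
  | vee a b => exact .inr ⟨true, a, b, rfl⟩
  | br a b => exact .inr ⟨false, a, b, rfl⟩

@[elab_as_elim]
theorem induction_node {motive : G → Prop} (one : motive one)
    (node : ∀ o a b, motive a → motive b → motive (node o a b)) (t : G) : motive t := by
  induction t with
  | one => exact one
  | vee a b ha hb => exact node true a b ha hb
  | br a b ha hb => exact node false a b ha hb

variable {k : Type*} [CommRing k]

variable (k) in
noncomputable abbrev graft (o : Bool) : (G →₀ k) →ₗ[k] (G →₀ k) →ₗ[k] (G →₀ k) :=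
  mapDomain₂ k (node o)

variable (k) in
noncomputable def hmul : (G →₀ k) →ₗ[k] (G →₀ k) →ₗ[k] (G →₀ k) := bilin k (hstar k)

theorem single_node (o : Bool) (a b : G) :
    single (node o a b) (1 : k) = graft k o (single a 1) (single b 1) :=
  (mapDomain₂_single_single _ a b).symm

@[simp]
theorem hmul_single_single (t s : G) : hmul k (single t 1) (single s 1) = hstar k t s :=
  bilin_single_single _ t s

@[simp]
theorem hstar_one_left (t : G) : hstar k one t = single t 1 := by
  simp [hstar]

@[simp]
theorem hstar_one_right (t : G) : hstar k t one = single t 1 := by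
  cases t <;> simp [hstar]

@[simp]
theorem hmul_one_left (x : G →₀ k) : hmul k (single one 1) x = x := by
  induction x using induction_basis with
  | single t => simp
  | zero | add | smul => simp_all

@[simp]
theorem hmul_one_right (x : G →₀ k) : hmul k x (single one 1) = x := by
  induction x using induction_basis with
  | single t => simp
  | zero | add | smul => simp_all

theorem hstar_node_node (o o' : Bool) (a b c d : G) :
    hstar k (node o a b) (node o' c d) =
      graft k o' (hstar k (node o a b) c) (single d 1) +
        graft k o (single a 1) (hstar k b (node o' c d)) := by
  cases o <;> cases o' <;>
    simp only [node, hstar, mapDomain₂_single_right, mapDomain₂_single_left]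

theorem hmul_graft_graft (o o' : Bool) (x y z w : G →₀ k) :
    hmul k (graft k o x y) (graft k o' z w) =
      graft k o' (hmul k (graft k o x y) z) w + graft k o x (hmul k y (graft k o' z w)) := by
  induction x using induction_basis with
  | zero | add | smul => simp_all <;> abel
  | single a =>
  induction y using induction_basis with
  | zero | add | smul => simp_all <;> abel
  | single b =>
  induction z using induction_basis with
  | zero | add | smul => simp_all <;> abel
  | single c =>
  induction w using induction_basis with
  | zero | add | smul => simp_all <;> abel
  | single d => simp [hstar_node_node]

theorem hmul_assoc_single (t s u : G) :
    hmul k (hmul k (single t 1) (single s 1)) (single u 1) =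
      hmul k (single t 1) (hmul k (single s 1) (single u 1)) := by
  obtain rfl | ⟨o, a, b, rfl⟩ := t.eq_one_or_eq_node
  · simp
  obtain rfl | ⟨o', c, d, rfl⟩ := s.eq_one_or_eq_node
  · simp
  obtain rfl | ⟨o'', e, f, rfl⟩ := u.eq_one_or_eq_node
  · simp
  set T := single (node o a b) (1 : k) with hT
  set S := single (node o' c d) (1 : k) with hS
  set U := single (node o'' e f) (1 : k) with hU
  have hL : hmul k (hmul k T S) U =
      graft k o'' (hmul k (hmul k T S) (single e 1)) (single f 1) +
        graft k o' (hmul k T (single c 1)) (hmul k (single d 1) U) +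
        graft k o (single a 1) (hmul k (hmul k (single b 1) S) U) := by
    simp only [hT, hS, hU, single_node, hmul_graft_graft, map_add, LinearMap.add_apply]
    abel
  have hR : hmul k T (hmul k S U) =
      graft k o'' (hmul k T (hmul k S (single e 1))) (single f 1) +
        graft k o' (hmul k T (single c 1)) (hmul k (single d 1) U) +
        graft k o (single a 1) (hmul k (single b 1) (hmul k S U)) := by
    simp only [hT, hS, hU, single_node, hmul_graft_graft, map_add]
    abel
  rw [hL, hR, hmul_assoc_single (node o a b) (node o' c d) e,
    hmul_assoc_single b (node o' c d) (node o'' e f)]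
termination_by t.order + s.order + u.order

theorem hmul_assoc (x y z : G →₀ k) : hmul k (hmul k x y) z = hmul k x (hmul k y z) := by
  induction x using induction_basis with
  | zero | add | smul => simp_all
  | single t =>
  induction y using induction_basis with
  | zero | add | smul => simp_all
  | single s =>
  induction z using induction_basis with
  | zero | add | smul => simp_all
  | single u => exact hmul_assoc_single t s u

variable (k) in
noncomputable def comul : (G →₀ k) →ₗ[k] (G × G →₀ k) := linearCombination k (cop k)

variable (k) in
noncomputable abbrev hmulTensor : (G × G →₀ k) →ₗ[k] (G × G →₀ k) →ₗ[k] (G × G →₀ k) :=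
  boxProd (hmul k) (hmul k)

variable (k) in
noncomputable abbrev hmulGraft (o : Bool) :
    (G × G →₀ k) →ₗ[k] (G × G →₀ k) →ₗ[k] (G × G →₀ k) :=
  boxProd (hmul k) (graft k o)

@[simp]
theorem comul_single (t : G) : comul k (single t 1) = cop k t := by
  simp [comul]

@[simp]
theorem cop_one : cop k one = single (one, one) 1 := by
  simp [cop]

theorem cop_node (o : Bool) (a b : G) :
    cop k (node o a b) =
      hmulGraft k o (cop k a) (cop k b) + tmul k (single (node o a b) 1) (single one 1) := by
  have hbasis (p q : G × G) :
      tmul k (hmul k (single p.1 1) (single q.1 1))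
          (graft k o (single p.2 1) (single q.2 1)) =
        mapDomain (fun u => (u, node o p.2 q.2)) (hstar k p.1 q.1) := by
    simp [mapDomain₂_single_right]
  cases o <;> simp only [node, cop, hmulGraft, boxProd, bilin_apply, hbasis, ← single_eq_tmul]

theorem comul_graft (o : Bool) (x y : G →₀ k) :
    comul k (graft k o x y) =
      hmulGraft k o (comul k x) (comul k y) + tmul k (graft k o x y) (single one 1) := by
  induction x using induction_basis with
  | zero | add | smul => simp_all <;> abel
  | single a =>
  induction y using induction_basis with
  | zero | add | smul => simp_all <;> abel
  | single b => simp [cop_node]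

@[simp]
theorem hmulTensor_one_left (X : G × G →₀ k) : hmulTensor k (single (one, one) 1) X = X := by
  induction X using induction_basis with
  | zero | add | smul => simp_all
  | single p =>
    simp only [single_eq_tmul p.1 p.2, single_eq_tmul one one, boxProd_tmul_tmul, hmul_one_left]

@[simp]
theorem hmulTensor_one_right (X : G × G →₀ k) : hmulTensor k X (single (one, one) 1) = X := by
  induction X using induction_basis with
  | zero | add | smul => simp_all
  | single p =>
    simp only [single_eq_tmul p.1 p.2, single_eq_tmul one one, boxProd_tmul_tmul, hmul_one_right]

theorem hmulTensor_hmulGraft_hmulGraft (o o' : Bool) (X Y Z W : G × G →₀ k) :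
    hmulTensor k (hmulGraft k o X Y) (hmulGraft k o' Z W) =
      hmulGraft k o' (hmulTensor k (hmulGraft k o X Y) Z) W +
        hmulGraft k o X (hmulTensor k Y (hmulGraft k o' Z W)) := by
  induction X using induction_basis with
  | zero | add | smul => simp_all <;> abel
  | single p =>
  induction Y using induction_basis with
  | zero | add | smul => simp_all <;> abel
  | single q =>
  induction Z using induction_basis with
  | zero | add | smul => simp_all <;> abel
  | single r =>
  induction W using induction_basis with
  | zero | add | smul => simp_all <;> abel
  | single s =>
  simp only [single_eq_tmul p.1 p.2, single_eq_tmul q.1 q.2, single_eq_tmul r.1 r.2,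
    single_eq_tmul s.1 s.2, boxProd_tmul_tmul, hmul_assoc, hmul_graft_graft, map_add]

theorem hmulTensor_hmulGraft_tmul_one (o : Bool) (X Y : G × G →₀ k) (z : G →₀ k) :
    hmulTensor k (hmulGraft k o X Y) (tmul k z (single one 1)) =
      hmulGraft k o X (hmulTensor k Y (tmul k z (single one 1))) := by
  induction X using induction_basis with
  | zero | add | smul => simp_all
  | single p =>
  induction Y using induction_basis with
  | zero | add | smul => simp_all
  | single q =>
  induction z using induction_basis with
  | zero | add | smul => simp_all
  | single r =>
  simp only [single_eq_tmul p.1 p.2, single_eq_tmul q.1 q.2, boxProd_tmul_tmul, hmul_assoc,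
    hmul_one_right]

theorem hmulTensor_tmul_one_hmulGraft (o : Bool) (z : G →₀ k) (X Y : G × G →₀ k) :
    hmulTensor k (tmul k z (single one 1)) (hmulGraft k o X Y) =
      hmulGraft k o (hmulTensor k (tmul k z (single one 1)) X) Y := by
  induction X using induction_basis with
  | zero | add | smul => simp_all
  | single p =>
  induction Y using induction_basis with
  | zero | add | smul => simp_all
  | single q =>
  induction z using induction_basis with
  | zero | add | smul => simp_all
  | single r =>
  simp only [single_eq_tmul p.1 p.2, single_eq_tmul q.1 q.2, boxProd_tmul_tmul, hmul_assoc,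
    hmul_one_left]

theorem comul_hmul_single (t s : G) :
    comul k (hmul k (single t 1) (single s 1)) =
      hmulTensor k (comul k (single t 1)) (comul k (single s 1)) := by
  obtain rfl | ⟨o, a, b, rfl⟩ := t.eq_one_or_eq_node
  · simp
  obtain rfl | ⟨o', c, d, rfl⟩ := s.eq_one_or_eq_node
  · simp
  set T := single (node o a b) (1 : k) with hT
  set S := single (node o' c d) (1 : k) with hS
  have hL : comul k (hmul k T S) =
      hmulGraft k o' (comul k (hmul k T (single c 1))) (comul k (single d 1)) +
        hmulGraft k o (comul k (single a 1)) (comul k (hmul k (single b 1) S)) +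
        tmul k (hmul k T S) (single one 1) := by
    simp only [hT, hS, single_node, hmul_graft_graft, comul_graft, map_add, LinearMap.add_apply]
    abel
  have hR : hmulTensor k (comul k T) (comul k S) =
      hmulGraft k o' (hmulTensor k (comul k T) (comul k (single c 1))) (comul k (single d 1)) +
        hmulGraft k o (comul k (single a 1)) (hmulTensor k (comul k (single b 1)) (comul k S)) +
        tmul k (hmul k T S) (single one 1) := by
    simp only [hT, hS, single_node, comul_graft, map_add, LinearMap.add_apply,
      hmulTensor_hmulGraft_hmulGraft, hmulTensor_hmulGraft_tmul_one,
      hmulTensor_tmul_one_hmulGraft, boxProd_tmul_tmul, hmul_graft_graft, hmul_one_left]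
    abel
  rw [hL, hR, comul_hmul_single (node o a b) c, comul_hmul_single b (node o' c d)]
termination_by t.order + s.order

theorem comul_hmul (x y : G →₀ k) :
    comul k (hmul k x y) = hmulTensor k (comul k x) (comul k y) := by
  induction x using induction_basis with
  | zero | add | smul => simp_all
  | single t =>
  induction y using induction_basis with
  | zero | add | smul => simp_all
  | single s => exact comul_hmul_single t s

variable (k) in
noncomputable def rTensorComul : (G × G →₀ k) →ₗ[k] (G × G × G →₀ k) :=
  linearCombination k fun p => mapDomain (fun q : G × G => (q.1, q.2, p.2)) (cop k p.1)

variable (k) in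
noncomputable def lTensorComul : (G × G →₀ k) →ₗ[k] (G × G × G →₀ k) :=
  linearCombination k fun p => mapDomain (fun q : G × G => (p.1, q.1, q.2)) (cop k p.2)

theorem rTensorComul_tmul (x y : G →₀ k) :
    rTensorComul k (tmul k x y) = tmulAssoc k (comul k x) y := by
  induction x using induction_basis with
  | zero | add | smul => simp_all
  | single a =>
  induction y using induction_basis with
  | zero | add | smul => simp_all
  | single b => simp [rTensorComul, mapDomain₂_single_right]

theorem lTensorComul_tmul (x y : G →₀ k) :
    lTensorComul k (tmul k x y) = tmul k x (comul k y) := by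
  induction x using induction_basis with
  | zero | add | smul => simp_all
  | single a =>
  induction y using induction_basis with
  | zero | add | smul => simp_all
  | single b => simp [lTensorComul, mapDomain₂_single_left]

theorem rTensorComul_hmulGraft (o : Bool) (X Y : G × G →₀ k) :
    rTensorComul k (hmulGraft k o X Y) =
      boxProd (hmul k) (hmulGraft k o) (rTensorComul k X) (rTensorComul k Y) := by
  induction X using induction_basis with
  | zero | add | smul => simp_all
  | single p =>
  induction Y using induction_basis with
  | zero | add | smul => simp_all
  | single q =>
  simp only [single_eq_tmul p.1 p.2, single_eq_tmul q.1 q.2, boxProd_tmul_tmul,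
    rTensorComul_tmul, comul_hmul, boxProd_tmulAssoc]

theorem lTensorComul_hmulGraft (o : Bool) (X Y : G × G →₀ k) :
    lTensorComul k (hmulGraft k o X Y) =
      boxProd (hmul k) (hmulGraft k o) (lTensorComul k X) (lTensorComul k Y) +
        tmulAssoc k (hmulGraft k o X Y) (single one 1) := by
  induction X using induction_basis with
  | zero | add | smul => simp_all <;> abel
  | single p =>
  induction Y using induction_basis with
  | zero | add | smul => simp_all <;> abel
  | single q =>
  simp only [single_eq_tmul p.1 p.2, single_eq_tmul q.1 q.2, boxProd_tmul_tmul,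
    lTensorComul_tmul, comul_graft, map_add, tmulAssoc_tmul]

theorem rTensorComul_cop (t : G) : rTensorComul k (cop k t) = lTensorComul k (cop k t) := by
  induction t using induction_node with
  | one => simp [rTensorComul, lTensorComul]
  | node o a b ha hb =>
    rw [cop_node, map_add, map_add, rTensorComul_hmulGraft, lTensorComul_hmulGraft, ha, hb,
      rTensorComul_tmul, lTensorComul_tmul, comul_single, comul_single, cop_node, cop_one,
      single_eq_tmul, map_add, LinearMap.add_apply, tmulAssoc_tmul]
    abel

end G

theorem stmt13_general (k : Type*) [CommRing k] (t : G) :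
    ((G.cop k t).sum fun p c =>
        c • Finsupp.mapDomain (fun q : G × G => (q.1, q.2, p.2)) (G.cop k p.1)) =
      ((G.cop k t).sum fun p c =>
        c • Finsupp.mapDomain (fun q : G × G => (p.1, q.1, q.2)) (G.cop k p.2)) :=
  G.rTensorComul_cop t

/-- The coproduct `Δ_h` is coassociative on `k[Y^∞]_h`:
`(Δ_h ⊗ Id) ∘ Δ_h = (Id ⊗ Δ_h) ∘ Δ_h`, in the free-module-on-products model of the
tensor powers. -/
theorem stmt13 (k : Type*) [CommRing k] [CharZero k] (t : G) :
    ((G.cop k t).sum fun p c =>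
        c • Finsupp.mapDomain (fun q : G × G => (q.1, q.2, p.2)) (G.cop k p.1)) =
      ((G.cop k t).sum fun p c =>
        c • Finsupp.mapDomain (fun q : G × G => (p.1, q.1, q.2)) (G.cop k p.2)) :=
  stmt13_general k t
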